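/- arXiv:1402.1211 — 4 statements merged into one kernel-verified Lean document; each statement's English description precedes it below -/
import Mathlib

section
/- Let Ψ : [t0,tf] → ℝ be measurable, bounded, with essential infimum v, and let h* ∈ L²₊[t0,tf] satisfy ∫ h* = Q > 0. Suppose ∫ Ψ(t)(h(t) − h*(t)) dt ≥ 0 for all nonnegative h ∈ L²[t0,tf] with ∫ h = Q. Then for almost every t ∈ [t0,tf], h*(t) > 0 implies Ψ(t) = v. -/
/-!
Testing the variational inequality against `h = (Q / |A|) 𝟙_A` with `A = {Ψ < v + ε}`, which has
positive measure by the definition of `v`, gives `∫ Ψ h* ≤ (v + ε) Q` for every `ε > 0`, hence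
`∫ Ψ h* ≤ v Q = ∫ v h*`. Since `Ψ ≥ v` almost everywhere, the nonnegative function `(Ψ - v) h*`
then has integral zero, so it vanishes almost everywhere.
-/

open MeasureTheory Set

noncomputable def essinfOn (t0 tf : ℝ) (g : ℝ → ℝ) : ℝ :=
  sSup {x : ℝ | volume {s ∈ Icc t0 tf | g s < x} = 0}

section essinfOn

variable {t0 tf ε : ℝ} {g : ℝ → ℝ}

lemma ae_essinfOn_le (hg : BddBelow (g '' Icc t0 tf)) :
    ∀ᵐ t ∂volume.restrict (Icc t0 tf), essinfOn t0 tf g ≤ g t := by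
  set S := {x : ℝ | volume {s ∈ Icc t0 tf | g s < x} = 0}
  obtain ⟨C, hC⟩ := hg
  have hS : S.Nonempty := by
    refine ⟨C, measure_mono_null (fun s hs => ?_) measure_empty⟩
    exact (hs.2.not_ge (hC (mem_image_of_mem g hs.1))).elim
  have hnull : ∀ q ∈ {q : ℚ | (q : ℝ) < essinfOn t0 tf g},
      volume {s ∈ Icc t0 tf | g s < q} = 0 := by
    intro q hq
    obtain ⟨y, hyS, hqy⟩ := exists_lt_of_lt_csSup hS hq
    have hsub : {s ∈ Icc t0 tf | g s < q} ⊆ {s ∈ Icc t0 tf | g s < y} :=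
      fun s hs => ⟨hs.1, hs.2.trans hqy⟩
    exact measure_mono_null hsub hyS
  rw [ae_restrict_iff' measurableSet_Icc, ae_iff]
  refine measure_mono_null (fun s hs => ?_) ((measure_biUnion_null_iff (to_countable _)).2 hnull)
  simp only [mem_ofPred_eq, Classical.not_imp, not_le] at hs
  obtain ⟨q, hsq, hqv⟩ := exists_rat_btwn hs.2
  exact mem_biUnion hqv ⟨hs.1, hsq⟩

lemma volume_restrict_lt_essinfOn_add_ne_zero (ht : t0 < tf) (hg : BddAbove (g '' Icc t0 tf))
    (hε : 0 < ε) : volume.restrict (Icc t0 tf) {t | g t < essinfOn t0 tf g + ε} ≠ 0 := by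
  set S := {x : ℝ | volume {s ∈ Icc t0 tf | g s < x} = 0}
  obtain ⟨C, hC⟩ := hg
  have hS : BddAbove S := by
    refine ⟨C, fun x hx => not_lt.1 fun hCx => ?_⟩
    have hsub : Icc t0 tf ⊆ {s ∈ Icc t0 tf | g s < x} :=
      fun s hs => ⟨hs, (hC (mem_image_of_mem g hs)).trans_lt hCx⟩
    have hIcc : volume (Icc t0 tf) = 0 := measure_mono_null hsub hx
    rw [Real.volume_Icc, ENNReal.ofReal_eq_zero] at hIcc
    linarith
  intro h0
  rw [Measure.restrict_apply' measurableSet_Icc, inter_comm] at h0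
  have : essinfOn t0 tf g + ε ≤ essinfOn t0 tf g := le_csSup hS h0
  linarith

end essinfOn

section VariationalInequality

variable {α : Type*} [MeasurableSpace α] {μ : Measure α}

lemma integral_mul_indicator_const_le {Ψ : α → ℝ} {A : Set α} {w c : ℝ} (hA : MeasurableSet A)
    (hAfin : μ A ≠ ⊤) (hΨ : IntegrableOn Ψ A μ) (hΨA : ∀ t ∈ A, Ψ t ≤ w) (hc : 0 ≤ c) :
    ∫ t, Ψ t * A.indicator (fun _ => c) t ∂μ ≤ w * c * μ.real A := by
  calc ∫ t, Ψ t * A.indicator (fun _ => c) t ∂μ = (∫ t in A, Ψ t ∂μ) * c := by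
        simp_rw [← indicator_mul_right]
        rw [integral_indicator hA, integral_mul_const]
    _ ≤ (∫ _ in A, w ∂μ) * c :=
        mul_le_mul_of_nonneg_right (setIntegral_mono_on hΨ (integrableOn_const hAfin) hA hΨA) hc
    _ = w * c * μ.real A := by rw [setIntegral_const, smul_eq_mul]; ring

lemma integral_mul_le_of_forall_integral_mul_sub_nonneg [IsFiniteMeasure μ] {Ψ h₀ : α → ℝ}
    {v Q C : ℝ} (p : ENNReal) (hQ : 0 < Q) (hΨ : Measurable Ψ) (hΨC : ∀ᵐ t ∂μ, ‖Ψ t‖ ≤ C)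
    (hh₀ : Integrable h₀ μ) (hpos : ∀ ε > 0, μ {t | Ψ t < v + ε} ≠ 0)
    (hVI : ∀ h : α → ℝ, MemLp h p μ → 0 ≤ᵐ[μ] h → ∫ t, h t ∂μ = Q →
      0 ≤ ∫ t, Ψ t * (h t - h₀ t) ∂μ) :
    ∫ t, Ψ t * h₀ t ∂μ ≤ v * Q := by
  refine le_of_forall_pos_le_add fun δ hδ => ?_
  set ε := δ / Q
  set A := {t | Ψ t < v + ε}
  have hA : MeasurableSet A := measurableSet_lt hΨ measurable_const
  have hAreal : 0 < μ.real A := ENNReal.toReal_pos (hpos ε (div_pos hδ hQ)) (measure_ne_top μ A)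
  set h := A.indicator fun _ => Q / μ.real A
  have hh : MemLp h p μ := memLp_indicator_const p hA _ (Or.inr (measure_ne_top μ A))
  have hh_int : ∫ t, h t ∂μ = Q := by
    rw [integral_indicator_const _ hA, smul_eq_mul]
    field_simp
  have hΨint : Integrable Ψ μ := .of_bound hΨ.aestronglyMeasurable C hΨC
  have hΨh : ∫ t, Ψ t * h t ∂μ ≤ (v + ε) * Q := by
    have := integral_mul_indicator_const_le hA (measure_ne_top μ A) hΨint.integrableOn
      (fun t ht => ht.le) (div_pos hQ hAreal).le
    rwa [mul_assoc, div_mul_cancel₀ _ hAreal.ne'] at this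
  have hsplit : ∫ t, Ψ t * (h t - h₀ t) ∂μ = ∫ t, Ψ t * h t ∂μ - ∫ t, Ψ t * h₀ t ∂μ := by
    simp_rw [mul_sub]
    exact integral_sub (((integrable_const _).indicator hA).bdd_mul hΨ.aestronglyMeasurable hΨC)
      (hh₀.bdd_mul hΨ.aestronglyMeasurable hΨC)
  have hVIh := hVI h hh (ae_of_all _ (indicator_nonneg fun _ _ => (div_pos hQ hAreal).le)) hh_int
  have : (v + ε) * Q = v * Q + δ := by rw [add_mul, div_mul_cancel₀ _ hQ.ne']
  linarith

lemma ae_eq_of_integral_mul_le_mul_integral {Ψ h : α → ℝ} {v : ℝ} (hΨv : ∀ᵐ t ∂μ, v ≤ Ψ t)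
    (hh : 0 ≤ᵐ[μ] h) (hint : Integrable h μ) (hΨh : Integrable (fun t => Ψ t * h t) μ)
    (hle : ∫ t, Ψ t * h t ∂μ ≤ v * ∫ t, h t ∂μ) :
    ∀ᵐ t ∂μ, 0 < h t → Ψ t = v := by
  have hnonneg : 0 ≤ᵐ[μ] fun t => (Ψ t - v) * h t := by
    filter_upwards [hΨv, hh] with t hΨt ht using mul_nonneg (sub_nonneg.2 hΨt) ht
  have hsub : (fun t => (Ψ t - v) * h t) = fun t => Ψ t * h t - v * h t := by
    ext t; ring
  have hint' : Integrable (fun t => (Ψ t - v) * h t) μ := hsub ▸ hΨh.sub (hint.const_mul v)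
  have hzero : ∫ t, (Ψ t - v) * h t ∂μ = 0 := by
    refine le_antisymm ?_ (integral_nonneg_of_ae hnonneg)
    rw [hsub, integral_sub hΨh (hint.const_mul v), integral_const_mul]
    linarith
  filter_upwards [(integral_eq_zero_iff_of_nonneg_ae hnonneg hint').1 hzero] with t ht hpos
  exact sub_eq_zero.1 ((mul_eq_zero.1 ht).resolve_right hpos.ne')

end VariationalInequality

/-- Sufficiency direction of the DUE ↔ VI equivalence, single path, single OD pair:
if `h*` solves the variational inequality, then a.e. `h*(t) > 0` implies `Ψ(t) = v`. -/
theorem vi_implies_due (t0 tf : ℝ) (ht : t0 < tf) (Q : ℝ) (hQ : 0 < Q)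
    (Ψ hstar : ℝ → ℝ) (hΨmeas : Measurable Ψ)
    (hΨbdd : ∃ C : ℝ, ∀ t ∈ Icc t0 tf, |Ψ t| ≤ C)
    (v : ℝ) (hv : v = essinfOn t0 tf Ψ)
    (hstar_mem : MemLp hstar 2 (volume.restrict (Icc t0 tf)))
    (hstar_nonneg : ∀ᵐ t ∂(volume.restrict (Icc t0 tf)), 0 ≤ hstar t)
    (hstar_cons : ∫ t in Icc t0 tf, hstar t = Q)
    (hVI : ∀ h : ℝ → ℝ, MemLp h 2 (volume.restrict (Icc t0 tf)) →
      (∀ᵐ t ∂(volume.restrict (Icc t0 tf)), 0 ≤ h t) →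
      (∫ t in Icc t0 tf, h t = Q) →
      0 ≤ ∫ t in Icc t0 tf, Ψ t * (h t - hstar t)) :
    ∀ᵐ t ∂(volume.restrict (Icc t0 tf)), 0 < hstar t → Ψ t = v := by
  obtain ⟨C, hC⟩ := hΨbdd
  subst hv
  have hbelow : BddBelow (Ψ '' Icc t0 tf) :=
    ⟨-C, forall_mem_image.2 fun t ht => neg_le_of_abs_le (hC t ht)⟩
  have habove : BddAbove (Ψ '' Icc t0 tf) :=
    ⟨C, forall_mem_image.2 fun t ht => le_of_abs_le (hC t ht)⟩
  have hΨC : ∀ᵐ t ∂volume.restrict (Icc t0 tf), ‖Ψ t‖ ≤ C :=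
    ae_restrict_of_forall_mem measurableSet_Icc hC
  have hstar_int : Integrable hstar (volume.restrict (Icc t0 tf)) := hstar_mem.integrable one_le_two
  refine ae_eq_of_integral_mul_le_mul_integral (ae_essinfOn_le hbelow) hstar_nonneg hstar_int
    (hstar_int.bdd_mul hΨmeas.aestronglyMeasurable hΨC) ?_
  rw [hstar_cons]
  exact integral_mul_le_of_forall_integral_mul_sub_nonneg 2 hQ hΨmeas hΨC hstar_int
    (fun ε hε => volume_restrict_lt_essinfOn_add_ne_zero ht habove hε) hVI
end

section
/- Let Ψ : [t0,tf] → ℝ be measurable and bounded with essential infimum v, ε ≥ 0, and φᵉ(t) = max(Ψ(t), v + ε). If h* ∈ L²₊[t0,tf] with ∫ h* = Q > 0 satisfies ∫ φᵉ(t)(h(t) − h*(t)) dt ≥ 0 for all nonnegative h ∈ L²[t0,tf] with ∫ h = Q, then for a.e. t, h*(t) > 0 implies v ≤ Ψ(t) ≤ v + ε. -/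
/-!
Suppose `h*` put mass `I > 0` on `{φ > b}` while `{φ < a}` is non-null for some `a < b`.
Removing that mass and spreading it uniformly over `{φ < a}` gives an admissible `h` with
`∫ φ (h - h*) ≤ (a - b) I < 0`, contradicting the variational inequality. Since
`φ = max(Ψ, v + ε)` and `{Ψ < a}` is non-null for every `a > v` (by the definition of the
essential infimum), letting `b` decrease to `v + ε` shows that `h*` vanishes a.e. where
`Ψ > v + ε`.
-/

open MeasureTheory Set

open Filter
open scoped ENNReal

section MassTransfer

variable {α : Type*}

noncomputable def moveMass (g : α → ℝ) (A B : Set α) (c : ℝ) : α → ℝ :=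
  Aᶜ.indicator g + B.indicator fun _ => c

lemma moveMass_sub (g : α → ℝ) (A B : Set α) (c : ℝ) :
    moveMass g A B c - g = B.indicator (fun _ => c) - A.indicator g := by
  rw [moveMass, indicator_compl]
  abel

variable [MeasurableSpace α] {μ : Measure α} {g : α → ℝ} {A B : Set α}

lemma moveMass_nonneg (hg : 0 ≤ᵐ[μ] g) {c : ℝ} (hc : 0 ≤ c) : 0 ≤ᵐ[μ] moveMass g A B c := by
  filter_upwards [hg] with x hx
  exact add_nonneg (indicator_nonneg (fun _ _ => hx) x) (indicator_nonneg (fun _ _ => hc) x)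

lemma integral_mul_moveMass_sub {φ : α → ℝ} (hφ : Integrable φ μ)
    (hφg : Integrable (φ * g) μ) (hA : MeasurableSet A) (hB : MeasurableSet B) (c : ℝ) :
    ∫ x, φ x * (moveMass g A B c x - g x) ∂μ =
      c * ∫ x in B, φ x ∂μ - ∫ x in A, φ x * g x ∂μ := by
  have hsplit : (fun x => φ x * (moveMass g A B c x - g x)) =
      B.indicator (fun x => φ x * c) - A.indicator (φ * g) := by
    ext x
    rw [← Pi.sub_apply (moveMass g A B c), moveMass_sub]
    simp only [Pi.sub_apply, mul_sub, ← indicator_mul_right]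
    rfl
  rw [hsplit, integral_sub' ((hφ.mul_const c).indicator hB) (hφg.indicator hA),
    integral_indicator hB, integral_indicator hA, integral_mul_const, mul_comm]
  rfl

variable [IsFiniteMeasure μ]

lemma memLp_moveMass {p : ℝ≥0∞} (hg : MemLp g p μ) (hA : MeasurableSet A) (hB : MeasurableSet B)
    (c : ℝ) : MemLp (moveMass g A B c) p μ :=
  (hg.indicator hA.compl).add ((memLp_const c).indicator hB)

lemma integral_moveMass (hg : Integrable g μ) (hA : MeasurableSet A) (hB : MeasurableSet B)
    (c : ℝ) :
    ∫ x, moveMass g A B c x ∂μ = ∫ x, g x ∂μ - ∫ x in A, g x ∂μ + c * μ.real B := by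
  have hmove : moveMass g A B c = g + (B.indicator (fun _ => c) - A.indicator g) := by
    rw [← moveMass_sub]; abel
  rw [hmove, integral_add' hg (((integrable_const c).indicator hB).sub (hg.indicator hA)),
    integral_sub' ((integrable_const c).indicator hB) (hg.indicator hA),
    integral_indicator hB, integral_indicator hA, setIntegral_const, smul_eq_mul]
  ring

end MassTransfer

section VariationalInequality

variable {α : Type*} [MeasurableSpace α] {μ : Measure α}

def IsMassVISolution (φ g : α → ℝ) (p : ℝ≥0∞) (μ : Measure α) : Prop :=
  ∀ h : α → ℝ, MemLp h p μ → 0 ≤ᵐ[μ] h → ∫ x, h x ∂μ = ∫ x, g x ∂μ →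
    0 ≤ ∫ x, φ x * (h x - g x) ∂μ

variable [IsFiniteMeasure μ] {φ g : α → ℝ} {p : ℝ≥0∞}

theorem IsMassVISolution.ae_le_of_lt (hVI : IsMassVISolution φ g p μ) (hp : 1 ≤ p)
    (hφm : Measurable φ) (hφ : MemLp φ ∞ μ) (hg : MemLp g p μ) (hg0 : 0 ≤ᵐ[μ] g) {a b : ℝ}
    (hab : a < b) (ha : μ {x | φ x < a} ≠ 0) :
    ∀ᵐ x ∂μ, 0 < g x → φ x ≤ b := by
  set A := {x | b < φ x}
  set B := {x | φ x < a}
  have hA : MeasurableSet A := measurableSet_lt measurable_const hφm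
  have hB : MeasurableSet B := measurableSet_lt hφm measurable_const
  have hgi : Integrable g μ := hg.integrable hp
  have hφi : Integrable φ μ := hφ.integrable le_top
  have hφg : Integrable (φ * g) μ := hφ.integrable_mul (memLp_one_iff_integrable.2 hgi)
  set I := ∫ x in A, g x ∂μ
  have hI0 : 0 ≤ I := setIntegral_nonneg_of_ae_restrict (ae_restrict_of_ae hg0)
  have hμB : 0 < μ.real B := ENNReal.toReal_pos ha (measure_ne_top μ B)
  set c := I / μ.real B
  have hc0 : 0 ≤ c := div_nonneg hI0 hμB.le
  have hcB : c * μ.real B = I := div_mul_cancel₀ I hμB.ne'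
  have hVI_move := hVI (moveMass g A B c) (memLp_moveMass hg hA hB c) (moveMass_nonneg hg0 hc0)
    (by rw [integral_moveMass hgi hA hB, hcB]; ring)
  rw [integral_mul_moveMass_sub hφi hφg hA hB] at hVI_move
  have hB_le : ∫ x in B, φ x ∂μ ≤ a * μ.real B := by
    have := setIntegral_mono_on hφi.integrableOn (integrableOn_const (C := a)) hB
      fun _ hx => hx.le
    rwa [setIntegral_const, smul_eq_mul, mul_comm] at this
  have hA_ge : b * I ≤ ∫ x in A, φ x * g x ∂μ := by
    rw [← integral_const_mul]
    refine integral_mono_ae (hgi.integrableOn.const_mul b) hφg.integrableOn ?_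
    filter_upwards [ae_restrict_mem hA, ae_restrict_of_ae hg0] with x hxA hx0
    exact mul_le_mul_of_nonneg_right hxA.le hx0
  have hI : I = 0 := by
    have : c * ∫ x in B, φ x ∂μ ≤ a * I :=
      calc c * ∫ x in B, φ x ∂μ ≤ c * (a * μ.real B) := mul_le_mul_of_nonneg_left hB_le hc0
        _ = a * I := by rw [← hcB]; ring
    nlinarith
  have hgA := (setIntegral_eq_zero_iff_of_nonneg_ae (ae_restrict_of_ae hg0)
    hgi.integrableOn).1 hI
  rw [EventuallyEq, ae_restrict_iff' hA] at hgA
  filter_upwards [hgA] with x hx hpos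
  exact not_lt.1 fun hbx => hpos.ne' (hx hbx)

theorem IsMassVISolution.ae_le (hVI : IsMassVISolution φ g p μ) (hp : 1 ≤ p)
    (hφm : Measurable φ) (hφ : MemLp φ ∞ μ) (hg : MemLp g p μ) (hg0 : 0 ≤ᵐ[μ] g) {c : ℝ}
    (hc : ∀ a, c < a → μ {x | φ x < a} ≠ 0) :
    ∀ᵐ x ∂μ, 0 < g x → φ x ≤ c := by
  obtain ⟨u, hu_anti, hcu, hu⟩ := exists_seq_strictAnti_tendsto c
  have hle : ∀ n, ∀ᵐ x ∂μ, 0 < g x → φ x ≤ u n := fun n =>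
    hVI.ae_le_of_lt hp hφm hφ hg hg0 (hu_anti n.lt_succ_self) (hc _ (hcu (n + 1)))
  filter_upwards [ae_all_iff.2 hle] with x hx hpos
  exact ge_of_tendsto' hu fun n => hx n hpos

end VariationalInequality

section EssInf

variable {α : Type*} [MeasurableSpace α] {μ : Measure α} {g : α → ℝ} {C : ℝ}

def essLowerBounds (μ : Measure α) (g : α → ℝ) : Set ℝ := {x | ∀ᵐ t ∂μ, x ≤ g t}

lemma ae_sSup_essLowerBounds_le (hne : (essLowerBounds μ g).Nonempty)
    (hbdd : BddAbove (essLowerBounds μ g)) : ∀ᵐ t ∂μ, sSup (essLowerBounds μ g) ≤ g t := by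
  obtain ⟨u, -, hu, hu_mem⟩ := exists_seq_tendsto_sSup hne hbdd
  filter_upwards [ae_all_iff.2 hu_mem] with t ht
  exact le_of_tendsto' hu ht

lemma measure_lt_ne_zero_of_sSup_essLowerBounds_lt (hbdd : BddAbove (essLowerBounds μ g))
    {a : ℝ} (ha : sSup (essLowerBounds μ g) < a) : μ {t | g t < a} ≠ 0 := fun hnull =>
  ha.not_ge <| le_csSup hbdd <| ae_iff.2 <| by simpa only [not_le] using hnull

lemma essLowerBounds_nonempty_of_ae_abs_le (hC : ∀ᵐ t ∂μ, |g t| ≤ C) :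
    (essLowerBounds μ g).Nonempty :=
  ⟨-C, by filter_upwards [hC] with t ht using by linarith [neg_abs_le (g t)]⟩

lemma bddAbove_essLowerBounds_of_ae_abs_le [NeZero μ] (hC : ∀ᵐ t ∂μ, |g t| ≤ C) :
    BddAbove (essLowerBounds μ g) := by
  refine ⟨C, fun x hx => not_lt.1 fun hCx => NeZero.ne μ (ae_eq_bot.1 ?_)⟩
  rw [← eventually_false_iff_eq_bot]
  filter_upwards [hC, hx] with t ht hxt
  linarith [le_abs_self (g t)]

end EssInf

lemma essinfOn_eq_sSup_essLowerBounds (t0 tf : ℝ) (g : ℝ → ℝ) :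
    essinfOn t0 tf g = sSup (essLowerBounds (volume.restrict (Icc t0 tf)) g) := by
  simp only [essinfOn, essLowerBounds, ae_iff, not_le, Measure.restrict_apply' measurableSet_Icc,
    inter_comm _ (Icc t0 tf)]
  rfl

theorem vi_implies_brdue_general (t0 tf : ℝ) (ht : t0 < tf) (Q : ℝ)
    (Ψ hstar : ℝ → ℝ) (hΨmeas : Measurable Ψ)
    (hΨbdd : ∃ C : ℝ, ∀ t ∈ Icc t0 tf, |Ψ t| ≤ C)
    (v : ℝ) (hv : v = essinfOn t0 tf Ψ)
    (ε : ℝ) (hε : 0 ≤ ε)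
    (φ : ℝ → ℝ) (hφ : φ = fun t => max (Ψ t) (v + ε))
    (hstar_mem : MemLp hstar 2 (volume.restrict (Icc t0 tf)))
    (hstar_nonneg : ∀ᵐ t ∂(volume.restrict (Icc t0 tf)), 0 ≤ hstar t)
    (hstar_cons : ∫ t in Icc t0 tf, hstar t = Q)
    (hVI : ∀ h : ℝ → ℝ, MemLp h 2 (volume.restrict (Icc t0 tf)) →
      (∀ᵐ t ∂(volume.restrict (Icc t0 tf)), 0 ≤ h t) →
      (∫ t in Icc t0 tf, h t = Q) →
      0 ≤ ∫ t in Icc t0 tf, φ t * (h t - hstar t)) :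
    ∀ᵐ t ∂(volume.restrict (Icc t0 tf)), 0 < hstar t → v ≤ Ψ t ∧ Ψ t ≤ v + ε := by
  obtain ⟨C, hC⟩ := hΨbdd
  set μ := volume.restrict (Icc t0 tf)
  have : NeZero μ := ⟨by simp [μ, ht.not_ge]⟩
  have hΨC : ∀ᵐ t ∂μ, |Ψ t| ≤ C := ae_restrict_of_forall_mem measurableSet_Icc hC
  have hbdd := bddAbove_essLowerBounds_of_ae_abs_le hΨC
  rw [essinfOn_eq_sSup_essLowerBounds] at hv
  have hv_le : ∀ᵐ t ∂μ, v ≤ Ψ t :=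
    hv ▸ ae_sSup_essLowerBounds_le (essLowerBounds_nonempty_of_ae_abs_le hΨC) hbdd
  have hΨ_lt : ∀ a, v < a → μ {t | Ψ t < a} ≠ 0 := fun a hva =>
    measure_lt_ne_zero_of_sSup_essLowerBounds_lt hbdd (hv ▸ hva)
  subst hφ
  have hφ_le : ∀ᵐ t ∂μ, 0 < hstar t → max (Ψ t) (v + ε) ≤ v + ε := by
    refine IsMassVISolution.ae_le (fun h hh h0 hQ => hVI h hh h0 (hQ.trans hstar_cons))
      one_le_two (hΨmeas.max measurable_const) ?_ hstar_mem hstar_nonneg fun a ha => ?_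
    · exact memLp_top_of_bound (hΨmeas.max measurable_const).aestronglyMeasurable (max C |v + ε|)
        (by filter_upwards [hΨC] with t ht
            exact abs_max_le_max_abs_abs.trans (max_le_max ht le_rfl))
    · simpa only [max_lt_iff, ha, and_true] using hΨ_lt a (by linarith)
  filter_upwards [hv_le, hφ_le] with t hvt hφt hpos
  exact ⟨hvt, (le_max_left _ _).trans (hφt hpos)⟩

/-- Sufficiency direction of the BR-DUE VI characterization, one path and one OD pair:
if `h*` solves the variational inequality with operator `φᵉ(t) = max(Ψ(t), v + ε)`,
then a.e. `h*(t) > 0` implies `v ≤ Ψ(t) ≤ v + ε`. -/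
theorem vi_implies_brdue (t0 tf : ℝ) (ht : t0 < tf) (Q : ℝ) (hQ : 0 < Q)
    (Ψ hstar : ℝ → ℝ) (hΨmeas : Measurable Ψ)
    (hΨbdd : ∃ C : ℝ, ∀ t ∈ Icc t0 tf, |Ψ t| ≤ C)
    (v : ℝ) (hv : v = essinfOn t0 tf Ψ)
    (ε : ℝ) (hε : 0 ≤ ε)
    (φ : ℝ → ℝ) (hφ : φ = fun t => max (Ψ t) (v + ε))
    (hstar_mem : MemLp hstar 2 (volume.restrict (Icc t0 tf)))
    (hstar_nonneg : ∀ᵐ t ∂(volume.restrict (Icc t0 tf)), 0 ≤ hstar t)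
    (hstar_cons : ∫ t in Icc t0 tf, hstar t = Q)
    (hVI : ∀ h : ℝ → ℝ, MemLp h 2 (volume.restrict (Icc t0 tf)) →
      (∀ᵐ t ∂(volume.restrict (Icc t0 tf)), 0 ≤ h t) →
      (∫ t in Icc t0 tf, h t = Q) →
      0 ≤ ∫ t in Icc t0 tf, φ t * (h t - hstar t)) :
    ∀ᵐ t ∂(volume.restrict (Icc t0 tf)), 0 < hstar t → v ≤ Ψ t ∧ Ψ t ≤ v + ε :=
  vi_implies_brdue_general t0 tf ht Q Ψ hstar hΨmeas hΨbdd v hv ε hε φ hφ hstar_mem hstar_nonneg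
    hstar_cons hVI
end

section
/- For two paths with measurable bounded cost functions Ψ₁, Ψ₂ : [t0,tf] → ℝ, tolerances ε₁, ε₂ ≥ 0, and v = min(essinf Ψ₁, essinf Ψ₂), define Φᵢ(t) = max(Ψᵢ(t), v + εᵢ) − (εᵢ − min(ε₁,ε₂)). Then essinf over t of min(Φ₁(t), Φ₂(t)) equals v + min(ε₁, ε₂). -/
open MeasureTheory Set

/-!
Every `Φᵢ` is bounded below by `v + min ε₁ ε₂`, so the sublevel set of `min Φ₁ Φ₂` at that level
is empty, giving `≥`. For `≤`, pick the path `i` realising `v = essinf Ψᵢ`: then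
`essinf (min Φ₁ Φ₂) ≤ essinf Φᵢ ≤ max (essinf Ψᵢ) (v + εᵢ) - (εᵢ - min ε₁ ε₂) = v + min ε₁ ε₂`,
where the middle inequality holds because above the level `v + min ε₁ ε₂` the sublevel sets of `Φᵢ`
are shifted sublevel sets of `Ψᵢ`.
-/

section essinfOn

variable {t0 tf : ℝ} {g h : ℝ → ℝ} {x a c C : ℝ}

lemma volume_setOf_lt_eq_zero_of_forall_le (hx : ∀ t ∈ Icc t0 tf, x ≤ g t) :
    volume {s ∈ Icc t0 tf | g s < x} = 0 := by
  convert measure_empty (μ := (volume : Measure ℝ))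
  exact sep_eq_empty_iff_mem_false.2 fun t ht => not_lt.2 (hx t ht)

lemma le_of_volume_setOf_lt_eq_zero (ht : t0 < tf) (hC : ∀ t ∈ Icc t0 tf, g t ≤ C)
    (hx : volume {s ∈ Icc t0 tf | g s < x} = 0) : x ≤ C := by
  by_contra! hCx
  have hfull : {s ∈ Icc t0 tf | g s < x} = Icc t0 tf :=
    sep_eq_self_iff_mem_true.2 fun t hts => (hC t hts).trans_lt hCx
  rw [hfull, Real.volume_Icc, ENNReal.ofReal_eq_zero] at hx
  linarith

lemma le_essinfOn (ht : t0 < tf) (hC : ∀ t ∈ Icc t0 tf, g t ≤ C)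
    (hx : volume {s ∈ Icc t0 tf | g s < x} = 0) : x ≤ essinfOn t0 tf g :=
  le_csSup ⟨C, fun _ => le_of_volume_setOf_lt_eq_zero ht hC⟩ hx

lemma le_essinfOn_of_forall_le (ht : t0 < tf) (hC : ∀ t ∈ Icc t0 tf, g t ≤ C)
    (hx : ∀ t ∈ Icc t0 tf, x ≤ g t) : x ≤ essinfOn t0 tf g :=
  le_essinfOn ht hC (volume_setOf_lt_eq_zero_of_forall_le hx)

lemma essinfOn_le (ha : ∀ t ∈ Icc t0 tf, a ≤ g t)
    (hc : ∀ x, volume {s ∈ Icc t0 tf | g s < x} = 0 → x ≤ c) : essinfOn t0 tf g ≤ c :=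
  csSup_le ⟨a, volume_setOf_lt_eq_zero_of_forall_le ha⟩ hc

lemma essinfOn_mono (ht : t0 < tf) (ha : ∀ t ∈ Icc t0 tf, a ≤ g t)
    (hC : ∀ t ∈ Icc t0 tf, h t ≤ C) (hgh : ∀ t ∈ Icc t0 tf, g t ≤ h t) :
    essinfOn t0 tf g ≤ essinfOn t0 tf h :=
  essinfOn_le ha fun x hx => le_essinfOn ht hC <|
    measure_mono_null (t := {s ∈ Icc t0 tf | g s < x})
      (fun t ⟨hts, hlt⟩ => ⟨hts, (hgh t hts).trans_lt hlt⟩) hx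

lemma essinfOn_max_sub_le (ht : t0 < tf) (hC : ∀ t ∈ Icc t0 tf, g t ≤ C) (c d : ℝ) :
    essinfOn t0 tf (fun t => max (g t) c - d) ≤ max (essinfOn t0 tf g) c - d := by
  refine essinfOn_le (a := c - d) (fun t _ => by linarith [le_max_right (g t) c]) fun x hx => ?_
  by_cases hxc : x ≤ c - d
  · linarith [le_max_right (essinfOn t0 tf g) c]
  · have hsub : {s ∈ Icc t0 tf | g s < x + d} ⊆ {s ∈ Icc t0 tf | max (g s) c - d < x} :=
      fun t ⟨hts, hlt⟩ => ⟨hts, by linarith [max_lt hlt (by linarith : c < x + d)]⟩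
    have hxd : x + d ≤ essinfOn t0 tf g := le_essinfOn ht hC (measure_mono_null hsub hx)
    linarith [le_max_left (essinfOn t0 tf g) c]

end essinfOn

theorem essinf_min_modified_operator_general (t0 tf : ℝ) (ht : t0 < tf)
    (Ψ₁ Ψ₂ : ℝ → ℝ)
    (hb₁ : ∃ C : ℝ, ∀ t ∈ Icc t0 tf, |Ψ₁ t| ≤ C)
    (hb₂ : ∃ C : ℝ, ∀ t ∈ Icc t0 tf, |Ψ₂ t| ≤ C)
    (ε₁ ε₂ : ℝ) (hε₁ : 0 ≤ ε₁) (hε₂ : 0 ≤ ε₂)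
    (v : ℝ) (hv : v = min (essinfOn t0 tf Ψ₁) (essinfOn t0 tf Ψ₂))
    (Φ₁ Φ₂ : ℝ → ℝ)
    (hΦ₁ : Φ₁ = fun t => max (Ψ₁ t) (v + ε₁) - (ε₁ - min ε₁ ε₂))
    (hΦ₂ : Φ₂ = fun t => max (Ψ₂ t) (v + ε₂) - (ε₂ - min ε₁ ε₂)) :
    essinfOn t0 tf (fun t => min (Φ₁ t) (Φ₂ t)) = v + min ε₁ ε₂ := by
  obtain ⟨C₁, hC₁⟩ := hb₁
  obtain ⟨C₂, hC₂⟩ := hb₂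
  replace hC₁ : ∀ t ∈ Icc t0 tf, Ψ₁ t ≤ C₁ := fun t hts => (abs_le.1 (hC₁ t hts)).2
  replace hC₂ : ∀ t ∈ Icc t0 tf, Ψ₂ t ≤ C₂ := fun t hts => (abs_le.1 (hC₂ t hts)).2
  subst hΦ₁ hΦ₂
  set m := min ε₁ ε₂
  have hΦ_ge (Ψ : ℝ → ℝ) (ε t : ℝ) : v + m ≤ max (Ψ t) (v + ε) - (ε - m) := by
    linarith [le_max_right (Ψ t) (v + ε)]
  have hΦ_le {Ψ : ℝ → ℝ} {C : ℝ} (hC : ∀ t ∈ Icc t0 tf, Ψ t ≤ C) (ε t : ℝ)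
      (hts : t ∈ Icc t0 tf) : max (Ψ t) (v + ε) - (ε - m) ≤ max C (v + ε) - (ε - m) :=
    sub_le_sub_right (max_le_max_right _ (hC t hts)) _
  have hΦ_essinf {Ψ : ℝ → ℝ} {C ε : ℝ} (hC : ∀ t ∈ Icc t0 tf, Ψ t ≤ C) (hε : 0 ≤ ε)
      (hΨ : essinfOn t0 tf Ψ = v) :
      essinfOn t0 tf (fun t => max (Ψ t) (v + ε) - (ε - m)) ≤ v + m := by
    have := essinfOn_max_sub_le ht hC (v + ε) (ε - m)
    rw [hΨ, max_eq_right (by linarith)] at this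
    linarith
  have hmin_ge (t : ℝ) (_ : t ∈ Icc t0 tf) := le_min (hΦ_ge Ψ₁ ε₁ t) (hΦ_ge Ψ₂ ε₂ t)
  refine le_antisymm ?_ <| le_essinfOn_of_forall_le ht
    (fun t hts => (min_le_left _ _).trans (hΦ_le hC₁ ε₁ t hts)) hmin_ge
  rcases min_choice (essinfOn t0 tf Ψ₁) (essinfOn t0 tf Ψ₂) with he | he
  · exact (essinfOn_mono ht hmin_ge (hΦ_le hC₁ ε₁) fun _ _ => min_le_left _ _).trans
      (hΦ_essinf hC₁ hε₁ (hv.trans he).symm)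
  · exact (essinfOn_mono ht hmin_ge (hΦ_le hC₂ ε₂) fun _ _ => min_le_right _ _).trans
      (hΦ_essinf hC₂ hε₂ (hv.trans he).symm)

/-- Two-path instance of `μᵉᵢⱼ = vᵢⱼ + min of tolerances`: with
`Φᵢ(t) = max(Ψᵢ(t), v + εᵢ) − (εᵢ − min(ε₁,ε₂))` and `v = min(essinf Ψ₁, essinf Ψ₂)`,
the essential infimum of `min(Φ₁, Φ₂)` is `v + min(ε₁, ε₂)`. -/
theorem essinf_min_modified_operator (t0 tf : ℝ) (ht : t0 < tf)
    (Ψ₁ Ψ₂ : ℝ → ℝ) (h₁ : Measurable Ψ₁) (h₂ : Measurable Ψ₂)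
    (hb₁ : ∃ C : ℝ, ∀ t ∈ Icc t0 tf, |Ψ₁ t| ≤ C)
    (hb₂ : ∃ C : ℝ, ∀ t ∈ Icc t0 tf, |Ψ₂ t| ≤ C)
    (ε₁ ε₂ : ℝ) (hε₁ : 0 ≤ ε₁) (hε₂ : 0 ≤ ε₂)
    (v : ℝ) (hv : v = min (essinfOn t0 tf Ψ₁) (essinfOn t0 tf Ψ₂))
    (Φ₁ Φ₂ : ℝ → ℝ)
    (hΦ₁ : Φ₁ = fun t => max (Ψ₁ t) (v + ε₁) - (ε₁ - min ε₁ ε₂))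
    (hΦ₂ : Φ₂ = fun t => max (Ψ₂ t) (v + ε₂) - (ε₂ - min ε₁ ε₂)) :
    essinfOn t0 tf (fun t => min (Φ₁ t) (Φ₂ t)) = v + min ε₁ ε₂ :=
  essinf_min_modified_operator_general t0 tf ht Ψ₁ Ψ₂ hb₁ hb₂ ε₁ ε₂ hε₁ hε₂ v hv Φ₁ Φ₂ hΦ₁ hΦ₂
end

section
/- Let Ψ : [t0,tf] → ℝ be L-Lipschitz, v its infimum over [t0,tf], and ε > 0. Partition [t0,tf] into n equal subintervals of length δ with δ < ε/(2L). Suppose the averages of Ψ over all subintervals containing a point where a piecewise-constant nonnegative function h* is positive are equal to the minimum average over all subintervals. Then h*(t) > 0 implies Ψ(t) ≤ v + ε for every t. -/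
/-!
On a cell of length `δ` an `L`-Lipschitz `Ψ` stays within `Lδ` of its value at any point of the
cell, so the integral over the cell is `δ Ψ(t)` up to `Lδ²`. Comparing the cell of a point where
`h* > 0` with a cell containing a minimiser of `Ψ` (whose integral is at least as large) gives
`Ψ(t) ≤ v + 2Lδ < v + ε`.
-/

open Set intervalIntegral

theorem abs_integral_sub_mul_le_of_lipschitzOnWith {f : ℝ → ℝ} {K : NNReal} {a b t : ℝ}
    (hab : a ≤ b) (hf : LipschitzOnWith K f (Icc a b)) (ht : t ∈ Icc a b) :
    |(∫ s in a..b, f s) - (b - a) * f t| ≤ K * (b - a) ^ 2 := by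
  have hint : IntervalIntegrable f MeasureTheory.volume a b :=
    (hf.continuousOn.mono (by rw [uIcc_of_le hab])).intervalIntegrable
  have hsub : (∫ s in a..b, f s) - (b - a) * f t = ∫ s in a..b, (f s - f t) := by
    rw [integral_sub hint intervalIntegrable_const, integral_const, smul_eq_mul]
  have hpt : ∀ s ∈ uIoc a b, ‖f s - f t‖ ≤ K * (b - a) := by
    intro s hs
    have hs' : s ∈ Icc a b := by
      rw [uIoc_of_le hab] at hs; exact Ioc_subset_Icc_self hs
    calc ‖f s - f t‖ = dist (f s) (f t) := rfl
      _ ≤ K * dist s t := hf.dist_le_mul s hs' t ht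
      _ ≤ K * (b - a) := by
        gcongr
        rw [Real.dist_eq, abs_sub_le_iff]
        constructor <;> linarith [hs'.1, hs'.2, ht.1, ht.2]
  calc |(∫ s in a..b, f s) - (b - a) * f t| = ‖∫ s in a..b, (f s - f t)‖ := by rw [hsub]; rfl
    _ ≤ K * (b - a) * |b - a| := norm_integral_le_of_norm_le_const hpt
    _ = K * (b - a) ^ 2 := by rw [abs_of_nonneg (sub_nonneg.2 hab)]; ring

theorem le_add_of_integral_le_of_lipschitzOnWith {f : ℝ → ℝ} {K : NNReal} {δ a b c d t t' : ℝ}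
    (hδ : 0 < δ) (hab : b - a = δ) (hcd : d - c = δ)
    (hfI : LipschitzOnWith K f (Icc a b)) (hfJ : LipschitzOnWith K f (Icc c d))
    (ht : t ∈ Icc a b) (ht' : t' ∈ Icc c d) (h : ∫ s in a..b, f s ≤ ∫ s in c..d, f s) :
    f t ≤ f t' + 2 * K * δ := by
  have hI := abs_integral_sub_mul_le_of_lipschitzOnWith (by linarith) hfI ht
  have hJ := abs_integral_sub_mul_le_of_lipschitzOnWith (by linarith) hfJ ht'
  rw [hab] at hI
  rw [hcd] at hJ
  have : δ * f t ≤ δ * (f t' + 2 * K * δ) := by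
    nlinarith [(abs_le.1 hI).1, (abs_le.1 hJ).2]
  exact le_of_mul_le_mul_left this hδ

theorem exists_mem_uniform_cell {a δ t : ℝ} (hδ : 0 ≤ δ) :
    ∀ {n : ℕ}, 0 < n → t ∈ Icc a (a + n * δ) →
      ∃ k : Fin n, t ∈ Icc (a + (k : ℕ) * δ) (a + ((k : ℕ) + 1) * δ)
  | 0, hn, _ => absurd hn (lt_irrefl 0)
  | m + 1, _, ht => by
    rcases Nat.eq_zero_or_pos m with rfl | hm
    · exact ⟨0, by simpa using ht⟩
    by_cases hle : t ≤ a + m * δ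
    · obtain ⟨k, hk⟩ := exists_mem_uniform_cell hδ hm ⟨ht.1, hle⟩
      exact ⟨k.castSucc, by simpa using hk⟩
    · exact ⟨Fin.last m, by simpa using ⟨(not_le.1 hle).le, by simpa using ht.2⟩⟩

theorem uniform_cell_subset {a δ : ℝ} (hδ : 0 ≤ δ) {n k : ℕ} (hk : k < n) :
    Icc (a + k * δ) (a + (k + 1) * δ) ⊆ Icc a (a + n * δ) := by
  have hk' : (k : ℝ) + 1 ≤ n := by exact_mod_cast hk
  apply Icc_subset_Icc
  · nlinarith [(k.cast_nonneg : (0:ℝ) ≤ k)]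
  · nlinarith

theorem brdue_existence_core_step_general
    (t0 tf : ℝ) (ht : t0 < tf) (L : ℝ) (hL : 0 < L)
    (Ψ : ℝ → ℝ)
    (hLip : ∀ s ∈ Icc t0 tf, ∀ t ∈ Icc t0 tf, |Ψ s - Ψ t| ≤ L * |s - t|)
    (v : ℝ) (hv : v = sInf (Ψ '' Icc t0 tf))
    (ε : ℝ)
    (n : ℕ) (δ : ℝ) (hδ : δ = (tf - t0) / n)
    (hmesh : δ < ε / (2 * L))
    (x : Fin n → ℝ)
    (hmin : ∀ i : Fin n, 0 < x i → ∀ j : Fin n,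
      (∫ t in (t0 + (i : ℕ) * δ)..(t0 + ((i : ℕ) + 1) * δ), Ψ t) ≤
      (∫ t in (t0 + (j : ℕ) * δ)..(t0 + ((j : ℕ) + 1) * δ), Ψ t)) :
    ∀ i : Fin n, ∀ t ∈ Icc (t0 + (i : ℕ) * δ) (t0 + ((i : ℕ) + 1) * δ),
      0 < x i → Ψ t ≤ v + ε := by
  intro i t hti hxi
  have hnpos : (0 : ℝ) < n := by exact_mod_cast i.pos
  have hδpos : 0 < δ := by rw [hδ]; exact div_pos (by linarith) hnpos
  have hend : t0 + n * δ = tf := by rw [hδ]; field_simp; ring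
  have hΨ : LipschitzOnWith L.toNNReal Ψ (Icc t0 tf) :=
    LipschitzOnWith.of_dist_le' (by simpa only [Real.dist_eq] using hLip)
  have hcell : ∀ k : Fin n, LipschitzOnWith L.toNNReal Ψ
      (Icc (t0 + (k : ℕ) * δ) (t0 + ((k : ℕ) + 1) * δ)) := fun k =>
    hΨ.mono (hend ▸ uniform_cell_subset hδpos.le k.isLt)
  obtain ⟨tm, htm, hvtm⟩ : v ∈ Ψ '' Icc t0 tf := hv ▸
    (isCompact_Icc.image_of_continuousOn hΨ.continuousOn).sInf_mem
      ((nonempty_Icc.2 ht.le).image Ψ)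
  obtain ⟨k, hk⟩ := exists_mem_uniform_cell hδpos.le i.pos (hend ▸ htm)
  have hclose := le_add_of_integral_le_of_lipschitzOnWith hδpos (by ring) (by ring)
    (hcell i) (hcell k) hti hk (hmin i hxi k)
  rw [Real.coe_toNNReal L hL.le] at hclose
  have h2Lδ : 2 * L * δ < ε := by rwa [lt_div_iff₀ (by positivity), mul_comm] at hmesh
  linarith

/-- Core step of the existence theorem for VT-BR-DUE (single-path version):
let `Ψ` be `L`-Lipschitz with infimum `v` on `[t0,tf]`, let `ε > 0`, and partition
`[t0,tf]` uniformly into `n` cells `Iᵢ = [t0 + i·δ, t0 + (i+1)·δ]` with `δ < ε/(2L)`.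
If `h*` is piecewise constant with value `x i ≥ 0` on `Iᵢ`, and the average of `Ψ`
over every cell where `h*` is positive equals the minimal average over all cells
(i.e. it is `≤` every other cell average), then `h*(t) > 0` implies `Ψ(t) ≤ v + ε`. -/
theorem brdue_existence_core_step
    (t0 tf : ℝ) (ht : t0 < tf) (L : ℝ) (hL : 0 < L)
    (Ψ : ℝ → ℝ)
    (hLip : ∀ s ∈ Icc t0 tf, ∀ t ∈ Icc t0 tf, |Ψ s - Ψ t| ≤ L * |s - t|)
    (v : ℝ) (hv : v = sInf (Ψ '' Icc t0 tf))
    (ε : ℝ) (hε : 0 < ε)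
    (n : ℕ) (hn : 1 ≤ n) (δ : ℝ) (hδ : δ = (tf - t0) / n)
    (hmesh : δ < ε / (2 * L))
    (x : Fin n → ℝ) (hx : ∀ i, 0 ≤ x i)
    (hmin : ∀ i : Fin n, 0 < x i → ∀ j : Fin n,
      (∫ t in (t0 + (i : ℕ) * δ)..(t0 + ((i : ℕ) + 1) * δ), Ψ t) ≤
      (∫ t in (t0 + (j : ℕ) * δ)..(t0 + ((j : ℕ) + 1) * δ), Ψ t)) :
    ∀ i : Fin n, ∀ t ∈ Icc (t0 + (i : ℕ) * δ) (t0 + ((i : ℕ) + 1) * δ),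
      0 < x i → Ψ t ≤ v + ε :=
  brdue_existence_core_step_general t0 tf ht L hL Ψ hLip v hv ε n δ hδ hmesh x hmin
end
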